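/- arXiv:1707.01318 — 3 statements merged into one kernel-verified Lean document; each statement's English description precedes it below -/
import Mathlib

section
/- Let G be a profinite group, H a closed normal subgroup of profinite order prime to p, and A a discrete p-primary torsion G-module. Then the canonical map A^H → A_H from H-invariants to H-coinvariants (invariants included into A then projected to coinvariants) is an isomorphism. -/
/-!
Given finitely many elements of `A`, some open normal subgroup `N` of `G` fixes them all, and
`K = N ∩ H` has finite index `m` in `H` with `p ∤ m`. On `K`-fixed elements the relative norm
`x ↦ ∑_{hK ∈ H/K} h • x` is well defined, lands in `A^H`, kills the augmentation generators
`h • a - a`, and is congruent to `m • x` modulo the augmentation. Since multiplication by `m` is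
invertible on `p`-primary elements, this shows that `A^H` meets the augmentation only in `0`
and maps onto the coinvariants.
-/

section RelNorm

variable {Γ A : Type*} [Group Γ] [AddCommGroup A] [DistribMulAction Γ A]

lemma smul_eq_smul_of_mk_eq {K : Subgroup Γ} {x : A} (hx : ∀ k ∈ K, k • x = x) {g₁ g₂ : Γ}
    (h : (g₁ : Γ ⧸ K) = g₂) : g₁ • x = g₂ • x := by
  rw [← mul_inv_cancel_left g₁ g₂, mul_smul, hx _ (QuotientGroup.eq.mp h)]

variable (K : Subgroup Γ) [Fintype (Γ ⧸ K)]

/-- Only meaningful on `K`-fixed elements, where it does not depend on the chosen coset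
representatives. -/
noncomputable def relNorm : A →+ A :=
  ∑ q : Γ ⧸ K, DistribSMul.toAddMonoidHom A q.out

lemma relNorm_apply (x : A) : relNorm K x = ∑ q : Γ ⧸ K, q.out • x := by
  simp [relNorm]

variable {K}

lemma smul_relNorm {x : A} (hx : ∀ k ∈ K, k • x = x) (g : Γ) :
    g • relNorm K x = relNorm K x := by
  rw [relNorm_apply, Finset.smul_sum]
  refine Fintype.sum_equiv (MulAction.toPerm g) _ _ fun q => ?_
  rw [← mul_smul]
  exact smul_eq_smul_of_mk_eq hx (by
    conv_rhs => rw [MulAction.toPerm_apply, QuotientGroup.out_eq', ← QuotientGroup.out_eq' q]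
    rfl)

lemma relNorm_smul [K.Normal] {x : A} (hx : ∀ k ∈ K, k • x = x) (g : Γ) :
    relNorm K (g • x) = relNorm K x := by
  rw [relNorm_apply, relNorm_apply]
  refine Fintype.sum_equiv (Equiv.mulRight (g : Γ ⧸ K)) _ _ fun q => ?_
  rw [← mul_smul]
  exact smul_eq_smul_of_mk_eq hx (by
    rw [QuotientGroup.out_eq', QuotientGroup.mk_mul, QuotientGroup.out_eq']
    rfl)

lemma relNorm_of_forall_smul_eq {x : A} (hx : ∀ g : Γ, g • x = x) :
    relNorm K x = K.index • x := by
  simp [relNorm_apply, hx, Subgroup.index_eq_card, Nat.card_eq_fintype_card]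

lemma relNorm_sub_index_nsmul (x : A) :
    relNorm K x - K.index • x = ∑ q : Γ ⧸ K, (q.out • x - x) := by
  simp [relNorm_apply, Finset.sum_sub_distrib, Subgroup.index_eq_card, Nat.card_eq_fintype_card]

end RelNorm

lemma exists_zsmul_nsmul_eq_self {A : Type*} [AddCommGroup A] {p m n : ℕ} (hp : p.Prime)
    (hm : ¬ p ∣ m) {x : A} (hx : p ^ n • x = 0) : ∃ u : ℤ, u • m • x = x := by
  obtain ⟨u, v, huv⟩ :=
    Nat.isCoprime_iff_coprime.mpr ((hp.coprime_iff_not_dvd.mpr hm).symm.pow_right n)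
  refine ⟨u, ?_⟩
  calc u • m • x = (u * m + v * (p ^ n : ℕ)) • x := by
        rw [add_smul, mul_smul, mul_smul, natCast_zsmul, natCast_zsmul, hx, smul_zero, add_zero]
    _ = x := by rw [huv, one_smul]

section Augmentation

variable {G A : Type*} [Group G] [AddCommGroup A] [DistribMulAction G A]

def augmentation (H : Subgroup G) (s : Set A) : AddSubgroup A :=
  AddSubgroup.closure {x | ∃ h ∈ H, ∃ a ∈ s, x = h • a - a}

lemma augmentation_univ (H : Subgroup G) :
    augmentation H (Set.univ : Set A) =
      AddSubgroup.closure {x : A | ∃ h ∈ H, ∃ a : A, x = h • a - a} := by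
  simp [augmentation]

lemma augmentation_mono (H : Subgroup G) {s t : Set A} (hst : s ⊆ t) :
    augmentation H s ≤ augmentation H t :=
  AddSubgroup.closure_mono fun _ ⟨h, hh, a, ha, hx⟩ => ⟨h, hh, a, hst ha, hx⟩

lemma relNorm_sub_index_nsmul_mem {H : Subgroup G} (K : Subgroup H) [Fintype (H ⧸ K)] (x : A) :
    relNorm K x - K.index • x ∈ augmentation H Set.univ := by
  rw [relNorm_sub_index_nsmul]
  exact AddSubgroup.sum_mem _ fun q _ =>
    AddSubgroup.subset_closure ⟨q.out, q.out.2, x, trivial, rfl⟩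

lemma relNorm_eq_zero_of_mem_augmentation {H N : Subgroup G} [N.Normal]
    [Fintype (H ⧸ N.subgroupOf H)] {c : A} (hc : c ∈ augmentation H {a | ∀ g ∈ N, g • a = a}) :
    relNorm (N.subgroupOf H) c = 0 := by
  suffices augmentation H {a | ∀ g ∈ N, g • a = a} ≤ (relNorm (N.subgroupOf H)).ker from this hc
  refine AddSubgroup.closure_le _ |>.mpr ?_
  rintro _ ⟨h, hh, a, ha, rfl⟩
  have hKa : ∀ k ∈ N.subgroupOf H, k • a = a := fun k hk => ha k (Subgroup.mem_subgroupOf.mp hk)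
  simp only [SetLike.mem_coe, AddMonoidHom.mem_ker, map_sub]
  rw [show h • a = (⟨h, hh⟩ : H) • a from rfl, relNorm_smul hKa, sub_self]

lemma augmentation_fixedBy_anti (H : Subgroup G) {N₁ N₂ : Subgroup G} (hN : N₁ ≤ N₂) :
    augmentation H {a : A | ∀ g ∈ N₂, g • a = a} ≤ augmentation H {a | ∀ g ∈ N₁, g • a = a} :=
  augmentation_mono H fun _ ha g hg => ha g (hN hg)

variable [TopologicalSpace G] [IsTopologicalGroup G] [CompactSpace G]

lemma exists_openNormalSubgroup_le_stabilizer {a : A}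
    (ha : IsOpen (MulAction.stabilizer G a : Set G)) :
    ∃ N : OpenNormalSubgroup G, ∀ g ∈ N, g • a = a :=
  let U : OpenSubgroup G := ⟨_, ha⟩
  (IsTopologicalGroup.exist_openNormalSubgroup_sub_clopen_nhds_of_one
    ⟨U.isClosed, U.isOpen⟩ U.one_mem).imp fun _ hN _ hg => hN hg

lemma exists_openNormalSubgroup_mem_augmentation
    (hdisc : ∀ a : A, IsOpen (MulAction.stabilizer G a : Set G)) (H : Subgroup G) {c : A}
    (hc : c ∈ augmentation H Set.univ) :
    ∃ N : OpenNormalSubgroup G, c ∈ augmentation H {a | ∀ g ∈ N, g • a = a} := by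
  induction hc using AddSubgroup.closure_induction with
  | mem _ hx =>
    obtain ⟨h, hh, a, -, rfl⟩ := hx
    obtain ⟨N, hN⟩ := exists_openNormalSubgroup_le_stabilizer (hdisc a)
    exact ⟨N, AddSubgroup.subset_closure ⟨h, hh, a, hN, rfl⟩⟩
  | zero => exact ⟨{ toOpenSubgroup := ⊤, isNormal' := Subgroup.normal_top }, zero_mem _⟩
  | add _ _ _ _ hx hy =>
    obtain ⟨N₁, hN₁⟩ := hx
    obtain ⟨N₂, hN₂⟩ := hy
    exact ⟨N₁ ⊓ N₂, add_mem (augmentation_fixedBy_anti H inf_le_left hN₁)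
      (augmentation_fixedBy_anti H inf_le_right hN₂)⟩
  | neg _ _ hx =>
    obtain ⟨N, hN⟩ := hx
    exact ⟨N, neg_mem hN⟩

end Augmentation

section Coinvariants

variable {p : ℕ} {G A : Type*} [Group G] [TopologicalSpace G] [IsTopologicalGroup G]
  [CompactSpace G] [AddCommGroup A] [DistribMulAction G A] {H : Subgroup G}

lemma eq_zero_of_mem_augmentation_of_forall_smul_eq (hp : p.Prime)
    (hHorder : ∀ N : Subgroup G, N.Normal → IsOpen (N : Set G) → ¬ p ∣ (N.subgroupOf H).index)
    (hdisc : ∀ a : A, IsOpen (MulAction.stabilizer G a : Set G))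
    (hprim : ∀ a : A, ∃ n : ℕ, p ^ n • a = 0) {c : A} (hc : c ∈ augmentation H Set.univ)
    (hfix : ∀ h ∈ H, h • c = c) : c = 0 := by
  obtain ⟨N, hN⟩ := exists_openNormalSubgroup_mem_augmentation hdisc H hc
  set K := (N : Subgroup G).subgroupOf H
  have hK : ¬ p ∣ K.index := hHorder N N.isNormal' N.isOpen'
  have : K.FiniteIndex := ⟨fun h => hK (h ▸ dvd_zero p)⟩
  let := K.fintypeQuotientOfFiniteIndex
  have hnorm : K.index • c = 0 := by
    rw [← relNorm_of_forall_smul_eq (K := K) fun g => hfix g g.2]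
    exact relNorm_eq_zero_of_mem_augmentation hN
  obtain ⟨n, hn⟩ := hprim c
  obtain ⟨u, hu⟩ := exists_zsmul_nsmul_eq_self hp hK hn
  rw [← hu, hnorm, smul_zero]

lemma exists_forall_smul_eq_sub_mem_augmentation (hp : p.Prime)
    (hHorder : ∀ N : Subgroup G, N.Normal → IsOpen (N : Set G) → ¬ p ∣ (N.subgroupOf H).index)
    (hdisc : ∀ a : A, IsOpen (MulAction.stabilizer G a : Set G))
    (hprim : ∀ a : A, ∃ n : ℕ, p ^ n • a = 0) (a : A) :
    ∃ b : A, (∀ h ∈ H, h • b = b) ∧ b - a ∈ augmentation H Set.univ := by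
  obtain ⟨N, hN⟩ := exists_openNormalSubgroup_le_stabilizer (hdisc a)
  set K := (N : Subgroup G).subgroupOf H
  have hK : ¬ p ∣ K.index := hHorder N N.isNormal' N.isOpen'
  have : K.FiniteIndex := ⟨fun h => hK (h ▸ dvd_zero p)⟩
  let := K.fintypeQuotientOfFiniteIndex
  obtain ⟨n, hn⟩ := hprim a
  obtain ⟨u, hu⟩ := exists_zsmul_nsmul_eq_self hp hK hn
  have hKa : ∀ k ∈ K, k • a = a := fun k hk => hN k hk
  refine ⟨u • relNorm K a, fun h hh => ?_, ?_⟩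
  · rw [smul_comm h u, ← Subgroup.mk_smul h hh, smul_relNorm hKa]
  · simpa [smul_sub, hu] using zsmul_mem (relNorm_sub_index_nsmul_mem K a) u

end Coinvariants

theorem stmt_1_general
    (p : ℕ) (hp : p.Prime)
    (G : Type*) [Group G] [TopologicalSpace G] [IsTopologicalGroup G]
    [CompactSpace G]
    (H : Subgroup G)
    (hHorder : ∀ N : Subgroup G, N.Normal → IsOpen (N : Set G) →
      ¬ p ∣ (N.subgroupOf H).index)
    (A : Type*) [AddCommGroup A] [DistribMulAction G A]
    (hdisc : ∀ a : A, IsOpen ((MulAction.stabilizer G a : Subgroup G) : Set G))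
    (hprim : ∀ a : A, ∃ n : ℕ, p ^ n • a = 0) :
    Function.Bijective
      (fun a : {a : A // ∀ h ∈ H, h • a = a} =>
        (QuotientAddGroup.mk a.1 :
          A ⧸ AddSubgroup.closure {x : A | ∃ h ∈ H, ∃ a : A, x = h • a - a})) := by
  refine ⟨?_, ?_⟩
  · rintro ⟨a, ha⟩ ⟨b, hb⟩ hab
    have hc := QuotientAddGroup.eq.mp hab
    rw [← augmentation_univ] at hc
    refine Subtype.ext (neg_add_eq_zero.mp ?_)
    exact eq_zero_of_mem_augmentation_of_forall_smul_eq hp hHorder hdisc hprim hc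
      fun h hh => by rw [smul_add, smul_neg, ha h hh, hb h hh]
  · rintro ⟨a⟩
    obtain ⟨b, hb, hba⟩ := exists_forall_smul_eq_sub_mem_augmentation hp hHorder hdisc hprim a
    refine ⟨⟨b, hb⟩, QuotientAddGroup.eq.mpr ?_⟩
    rw [← augmentation_univ]
    simpa [neg_add_eq_sub] using neg_mem hba

/-- Let `G` be a profinite group, `H` a closed normal subgroup of profinite order prime to `p`
(every open normal subgroup of `G` cuts out a finite quotient of `H` of order prime to `p`),
and `A` a discrete `p`-primary torsion `G`-module (each stabilizer is open, every element is
killed by a power of `p`).  Then the canonical map `A^H → A_H` from `H`-invariants to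
`H`-coinvariants is an isomorphism (i.e. a bijection). -/
theorem stmt_1
    (p : ℕ) (hp : p.Prime)
    (G : Type*) [Group G] [TopologicalSpace G] [IsTopologicalGroup G]
    [CompactSpace G] [TotallyDisconnectedSpace G]
    (H : Subgroup G) [H.Normal] (hHclosed : IsClosed (H : Set G))
    (hHorder : ∀ N : Subgroup G, N.Normal → IsOpen (N : Set G) →
      ¬ p ∣ (N.subgroupOf H).index)
    (A : Type*) [AddCommGroup A] [DistribMulAction G A]
    (hdisc : ∀ a : A, IsOpen ((MulAction.stabilizer G a : Subgroup G) : Set G))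
    (hprim : ∀ a : A, ∃ n : ℕ, p ^ n • a = 0) :
    Function.Bijective
      (fun a : {a : A // ∀ h ∈ H, h • a = a} =>
        (QuotientAddGroup.mk a.1 :
          A ⧸ AddSubgroup.closure {x : A | ∃ h ∈ H, ∃ a : A, x = h • a - a})) :=
  stmt_1_general p hp G H hHorder A hdisc hprim
end

section
/- Let O be a complete DVR with uniformizer ϖ and fraction field K, and let A ≅ (K/O)^n be a cofree O-module with ϖ-torsion A[ϖ]. For any profinite group G acting continuously on A, if H^0(G, A[ϖ]) = 0 then H^0(G, A) = 0, and consequently the map H^1(G, A[ϖ]) → H^1(G, A)[ϖ] induced by the inclusion A[ϖ] ↪ A is an isomorphism. -/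
/-!
`A ≅ (K/O)ⁿ` is `ϖ`-divisible and every element is killed by a power of `ϖ`. If `a` is
`G`-invariant with `ϖ ^ (m + 1) • a = 0`, then `ϖ ^ m • a` is an invariant of `A[ϖ]`, hence zero;
induction on `m` gives `H⁰(G, A) = 0`. If a `ϖ`-torsion cocycle is the coboundary of `a`, then
`ϖ • a` is invariant, hence zero, so `a ∈ A[ϖ]`: this is injectivity. If `ϖ • c` is the
coboundary of `a = ϖ • b`, then `c` minus the coboundary of `b` is a continuous cocycle with
values in `A[ϖ]`: this is surjectivity.
-/

open Module
open scoped nonZeroDivisors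

theorem FractionRing.isTorsion_quotient_range (R : Type*) [CommRing R] :
    IsTorsion R (FractionRing R ⧸ LinearMap.range (Algebra.linearMap R (FractionRing R))) := by
  intro x
  obtain ⟨k, rfl⟩ := Submodule.Quotient.mk_surjective _ x
  obtain ⟨⟨r, s⟩, rfl⟩ := IsLocalization.mk'_surjective R⁰ k
  refine ⟨s, ?_⟩
  rw [Submonoid.smul_def, ← Submodule.Quotient.mk_smul, Submodule.Quotient.mk_eq_zero]
  exact ⟨r, by simp [Algebra.smul_def, IsLocalization.mk'_spec']⟩

theorem FractionRing.smul_surjective_quotient_range {R : Type*} [CommRing R] [IsDomain R]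
    {r : R} (hr : r ≠ 0) :
    Function.Surjective fun x :
      FractionRing R ⧸ LinearMap.range (Algebra.linearMap R (FractionRing R)) => r • x := by
  intro x
  obtain ⟨k, rfl⟩ := Submodule.Quotient.mk_surjective _ x
  refine ⟨Submodule.Quotient.mk ((algebraMap R (FractionRing R) r)⁻¹ * k), ?_⟩
  have hr' : algebraMap R (FractionRing R) r ≠ 0 :=
    IsFractionRing.to_map_ne_zero_of_mem_nonZeroDivisors (mem_nonZeroDivisors_of_ne_zero hr)
  simp only [← Submodule.Quotient.mk_smul, Algebra.smul_def, mul_inv_cancel_left₀ hr']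

theorem Module.IsTorsion'.pi {R : Type*} [CommMonoid R] {S : Submonoid R} {ι : Type*} [Finite ι]
    {M : ι → Type*} [∀ i, AddCommMonoid (M i)] [∀ i, DistribMulAction R (M i)]
    (h : ∀ i, IsTorsion' (M i) S) : IsTorsion' (∀ i, M i) S := by
  intro x
  choose a ha using fun i => h i (x := x i)
  have := Fintype.ofFinite ι
  refine ⟨∏ i, a i, funext fun i => ?_⟩
  obtain ⟨b, hb⟩ : a i ∣ ∏ j, a j := Finset.dvd_prod_of_mem _ (Finset.mem_univ i)
  rw [Pi.smul_apply, hb, mul_comm, mul_smul, ha i, smul_zero, Pi.zero_apply]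

theorem IsDiscreteValuationRing.exists_pow_smul_eq_zero {R : Type*} [CommRing R] [IsDomain R]
    [IsDiscreteValuationRing R] {M : Type*} [AddCommGroup M] [Module R M] {ϖ : R}
    (hϖ : Irreducible ϖ) (h : IsTorsion R M) (x : M) : ∃ m : ℕ, ϖ ^ m • x = 0 := by
  obtain ⟨⟨s, hs⟩, hsx⟩ := h (x := x)
  obtain ⟨m, u, rfl⟩ := eq_unit_mul_pow_irreducible (nonZeroDivisors.ne_zero hs) hϖ
  refine ⟨m, ?_⟩
  rw [← Units.inv_mul_cancel_left u (ϖ ^ m), mul_smul]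
  exact smul_eq_zero_of_right _ hsx

section CofreeModule

variable {R : Type*} [CommRing R] {A : Type*} [AddCommGroup A] [Module R A] {ι : Type*}

theorem isTorsion_of_linearEquiv_pi_quotient_range [Finite ι]
    (e : A ≃ₗ[R] (ι → FractionRing R ⧸ LinearMap.range (Algebra.linearMap R (FractionRing R)))) :
    IsTorsion R A := by
  intro a
  obtain ⟨s, hs⟩ := IsTorsion'.pi (fun _ => FractionRing.isTorsion_quotient_range R) (x := e a)
  exact ⟨s, e.injective (by rw [Submonoid.smul_def, map_smul, ← Submonoid.smul_def, hs, map_zero])⟩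

theorem smul_surjective_of_linearEquiv_pi_quotient_range [IsDomain R] {r : R} (hr : r ≠ 0)
    (e : A ≃ₗ[R] (ι → FractionRing R ⧸ LinearMap.range (Algebra.linearMap R (FractionRing R)))) :
    Function.Surjective fun a : A => r • a := by
  intro a
  obtain ⟨y, hy⟩ :=
    Function.Surjective.piMap (fun _ => FractionRing.smul_surjective_quotient_range hr) (e a)
  exact ⟨e.symm y, e.injective (by rw [map_smul, e.apply_symm_apply]; exact hy)⟩

end CofreeModule

section FixedPoints

variable {G R M : Type*} [CommRing R] [AddCommGroup M] [Module R M] [SMul G M]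
  [SMulCommClass G R M] {ϖ : R}

theorem eq_zero_of_forall_smul_eq_self_of_pow_smul_eq_zero
    (hH0 : ∀ a ∈ Submodule.torsionBy R M ϖ, (∀ g : G, g • a = a) → a = 0)
    {a : M} (ha : ∀ g : G, g • a = a) {m : ℕ} (hm : ϖ ^ m • a = 0) : a = 0 := by
  induction m with
  | zero => simpa using hm
  | succ k ih =>
    refine ih (hH0 _ ?_ fun g => by rw [smul_comm, ha])
    rw [Submodule.mem_torsionBy_iff, smul_smul, ← pow_succ', hm]

theorem mem_torsionBy_of_smul_smul_sub_eq_zero (hH0 : ∀ a : M, (∀ g : G, g • a = a) → a = 0)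
    {a : M} (ha : ∀ g : G, ϖ • (g • a - a) = 0) : a ∈ Submodule.torsionBy R M ϖ :=
  (Submodule.mem_torsionBy_iff _ _).mpr <|
    hH0 _ fun g => by rw [← sub_eq_zero, smul_comm, ← smul_sub, ha]

end FixedPoints

section Stmt4

variable (G : Type*) [Group G] [TopologicalSpace G]
variable (A : Type*) [AddCommGroup A] [TopologicalSpace A] [DistribMulAction G A]

/-- A continuous 1-cocycle on `G` with values in the discrete `G`-module `A`. -/
def IsContOneCocycle4 (c : G → A) : Prop :=
  Continuous c ∧ ∀ g₁ g₂ : G, c (g₁ * g₂) = c g₁ + g₁ • c g₂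

section Cocycles

variable {G A}

theorem IsContOneCocycle4.sub_coboundary [IsTopologicalGroup G] [DiscreteTopology A]
    (hdisc : ∀ a : A, IsOpen ((MulAction.stabilizer G a : Subgroup G) : Set G))
    {c : G → A} (hc : IsContOneCocycle4 G A c) (b : A) :
    IsContOneCocycle4 G A fun g => c g - (g • b - b) := by
  have := continuousSMul_iff_stabilizer_isOpen.mpr hdisc
  refine ⟨by have := hc.1; fun_prop, fun g₁ g₂ => ?_⟩
  simp only [hc.2 g₁ g₂, mul_smul, smul_sub]
  abel

theorem exists_torsionBy_cocycle_sub_eq_coboundary {O : Type*} [CommRing O] [Module O A]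
    [SMulCommClass G O A] [IsTopologicalGroup G] [DiscreteTopology A]
    (hdisc : ∀ a : A, IsOpen ((MulAction.stabilizer G a : Subgroup G) : Set G))
    {ϖ : O} (hsurj : Function.Surjective fun a : A => ϖ • a)
    {c : G → A} (hc : IsContOneCocycle4 G A c) {a : A} (ha : ∀ g : G, ϖ • c g = g • a - a) :
    ∃ c' : G → A, IsContOneCocycle4 G A c' ∧
      (∀ g : G, c' g ∈ Submodule.torsionBy O A ϖ) ∧
      ∃ a : A, ∀ g : G, c g - c' g = g • a - a := by
  obtain ⟨b, rfl⟩ := hsurj a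
  refine ⟨_, hc.sub_coboundary hdisc b, fun g => ?_, b, fun g => sub_sub_cancel _ _⟩
  rw [Submodule.mem_torsionBy_iff, smul_sub, ha, smul_sub, smul_comm, sub_self]

end Cocycles

theorem stmt_4
    (O : Type*) [CommRing O] [IsDomain O] [IsDiscreteValuationRing O]
    (ϖ : O) (hϖ : Irreducible ϖ)
    [Module O A] [SMulCommClass G O A]
    (n : ℕ)
    (hcofree : Nonempty (A ≃ₗ[O]
      (Fin n → ((FractionRing O) ⧸ LinearMap.range (Algebra.linearMap O (FractionRing O))))))
    [IsTopologicalGroup G]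
    [DiscreteTopology A]
    (hdisc : ∀ a : A, IsOpen ((MulAction.stabilizer G a : Subgroup G) : Set G))
    (hH0 : ∀ a : A, a ∈ Submodule.torsionBy O A ϖ → (∀ g : G, g • a = a) → a = 0) :
    (∀ a : A, (∀ g : G, g • a = a) → a = 0) ∧
    (∀ c : G → A, IsContOneCocycle4 G A c → (∀ g : G, c g ∈ Submodule.torsionBy O A ϖ) →
      (∃ a : A, ∀ g : G, c g = g • a - a) →
      ∃ b ∈ Submodule.torsionBy O A ϖ, ∀ g : G, c g = g • b - b) ∧
    (∀ c : G → A, IsContOneCocycle4 G A c →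
      (∃ a : A, ∀ g : G, ϖ • c g = g • a - a) →
      ∃ c' : G → A, IsContOneCocycle4 G A c' ∧
        (∀ g : G, c' g ∈ Submodule.torsionBy O A ϖ) ∧
        ∃ a : A, ∀ g : G, c g - c' g = g • a - a) := by
  obtain ⟨e⟩ := hcofree
  have hA0 : ∀ a : A, (∀ g : G, g • a = a) → a = 0 := by
    intro a ha
    obtain ⟨m, hm⟩ := IsDiscreteValuationRing.exists_pow_smul_eq_zero hϖ
      (isTorsion_of_linearEquiv_pi_quotient_range e) a
    exact eq_zero_of_forall_smul_eq_self_of_pow_smul_eq_zero hH0 ha hm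
  refine ⟨hA0, ?_, ?_⟩
  · rintro c - hc ⟨a, ha⟩
    refine ⟨a, mem_torsionBy_of_smul_smul_sub_eq_zero hA0 fun g => ?_, ha⟩
    rw [← ha, ← Submodule.mem_torsionBy_iff]
    exact hc g
  · rintro c hc ⟨a, ha⟩
    exact exists_torsionBy_cocycle_sub_eq_coboundary hdisc
      (smul_surjective_of_linearEquiv_pi_quotient_range hϖ.ne_zero e) hc ha

end Stmt4
end

section
/- Let 0 → A → B → C → D be an exact sequence of finitely generated modules over a Noetherian local domain O (a DVR), where A is a torsion module and D is torsion-free. Then the induced sequence 0 → B̃ → C̃ → D is exact, where B̃ and C̃ denote the quotients of B and C by their torsion submodules. -/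
namespace Submodule

variable {R M N P : Type*} [CommSemiring R]
  [AddCommMonoid M] [AddCommMonoid N] [AddCommMonoid P]
  [Module R M] [Module R N] [Module R P]

theorem torsion_le_comap_torsion (φ : M →ₗ[R] N) : torsion R M ≤ (torsion R N).comap φ := by
  rintro m ⟨a, ham⟩
  exact ⟨a, by rw [Submonoid.smul_def] at ham ⊢; rw [← map_smul, ham, map_zero]⟩

theorem map_eq_zero_of_mem_torsion_of_torsion_eq_bot (φ : M →ₗ[R] N) (hN : torsion R N = ⊥)
    {m : M} (hm : m ∈ torsion R M) : φ m = 0 := by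
  simpa [hN] using torsion_le_comap_torsion φ hm

theorem mem_torsion_of_apply_mem_torsion {f : M →ₗ[R] N} {g : N →ₗ[R] P}
    (hfg : Function.Exact f g) (hM : Module.IsTorsion R M) {n : N}
    (hn : g n ∈ torsion R P) : n ∈ torsion R N := by
  obtain ⟨a, hagn⟩ := hn
  rw [Submonoid.smul_def] at hagn
  obtain ⟨x, hx⟩ := (hfg ((a : R) • n)).mp (by rwa [map_smul])
  obtain ⟨b, hbx⟩ := @hM x
  refine ⟨b * a, ?_⟩
  rw [Submonoid.smul_def] at hbx ⊢
  rw [Submonoid.coe_mul, mul_smul, ← hx, ← map_smul, hbx, map_zero]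

end Submodule

open Submodule in
theorem stmt_15_general
    (O : Type*) [CommRing O]
    (A B C D : Type*) [AddCommGroup A] [AddCommGroup B] [AddCommGroup C] [AddCommGroup D]
    [Module O A] [Module O B] [Module O C] [Module O D]
    (f : A →ₗ[O] B) (g : B →ₗ[O] C) (h : C →ₗ[O] D)
    (hfg : LinearMap.range f = LinearMap.ker g)
    (hgh : LinearMap.range g = LinearMap.ker h)
    (hA : Module.IsTorsion O A)
    (hD : Submodule.torsion O D = ⊥) :
    -- the map `C̃ → D` is well defined on the torsion-free quotient
    (∀ c ∈ Submodule.torsion O C, h c = 0) ∧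
    -- `B̃ → C̃` is injective
    (∀ b : B, g b ∈ Submodule.torsion O C → b ∈ Submodule.torsion O B) ∧
    -- image of `B̃ → C̃` contains the kernel of `C̃ → D` ...
    (∀ c : C, h c = 0 → ∃ b : B, c - g b ∈ Submodule.torsion O C) ∧
    -- ... and is contained in it
    (∀ b : B, h (g b) = 0) := by
  have exact_fg : Function.Exact f g := LinearMap.exact_iff.mpr hfg.symm
  have exact_gh : Function.Exact g h := LinearMap.exact_iff.mpr hgh.symm
  refine ⟨fun c => map_eq_zero_of_mem_torsion_of_torsion_eq_bot h hD,
    fun b => mem_torsion_of_apply_mem_torsion exact_fg hA, fun c hc => ?_,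
    exact_gh.apply_apply_eq_zero⟩
  obtain ⟨b, rfl⟩ := (exact_gh c).mp hc
  exact ⟨b, by rw [sub_self]; exact zero_mem _⟩

/-- Let `0 → A → B → C → D` be an exact sequence of finitely generated modules over a DVR
`O`, with `A` torsion and `D` torsion-free.  Then the induced sequence `0 → B̃ → C̃ → D` is
exact, where `B̃`, `C̃` are the quotients of `B`, `C` by their torsion submodules; stated
concretely:  the induced map `B̃ → C̃` is injective, its image is the kernel of the induced
map `C̃ → D`, and the latter map is well defined. -/
theorem stmt_15
    (O : Type*) [CommRing O] [IsDomain O] [IsDiscreteValuationRing O]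
    (A B C D : Type*) [AddCommGroup A] [AddCommGroup B] [AddCommGroup C] [AddCommGroup D]
    [Module O A] [Module O B] [Module O C] [Module O D]
    [Module.Finite O A] [Module.Finite O B] [Module.Finite O C] [Module.Finite O D]
    (f : A →ₗ[O] B) (g : B →ₗ[O] C) (h : C →ₗ[O] D)
    (hf : Function.Injective f)
    (hfg : LinearMap.range f = LinearMap.ker g)
    (hgh : LinearMap.range g = LinearMap.ker h)
    (hA : Module.IsTorsion O A)
    (hD : Submodule.torsion O D = ⊥) :
    -- the map `C̃ → D` is well defined on the torsion-free quotient
    (∀ c ∈ Submodule.torsion O C, h c = 0) ∧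
    -- `B̃ → C̃` is injective
    (∀ b : B, g b ∈ Submodule.torsion O C → b ∈ Submodule.torsion O B) ∧
    -- image of `B̃ → C̃` contains the kernel of `C̃ → D` ...
    (∀ c : C, h c = 0 → ∃ b : B, c - g b ∈ Submodule.torsion O C) ∧
    -- ... and is contained in it
    (∀ b : B, h (g b) = 0) :=
  stmt_15_general O A B C D f g h hfg hgh hA hD
end
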